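/- There is no preorder ≽ on Δ that simultaneously satisfies Pareto, Converse Pareto, Weak Unidimensional Expectations, Independence, and Negative Dominance. -/
import Mathlib


open scoped BigOperators

noncomputable section

/-- A finite-support lottery on `X`. -/
structure Lottery (X : Type*) where
  val : X →₀ ℝ
  nonneg : ∀ x, 0 ≤ val x
  total : val.sum (fun _ p => p) = 1

namespace Lottery

variable {X : Type*}

/-- The point-mass lottery at `x`. -/
def delta (x : X) : Lottery X where
  val := Finsupp.single x 1
  nonneg := fun y => by
    classical
    rw [Finsupp.single_apply]
    split <;> norm_num
  total := by
    rw [Finsupp.sum_single_index rfl]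

/-- The mixture `α • f + (1 - α) • g`. -/
def mix (α : ℝ) (h1 : 0 ≤ α) (h2 : α ≤ 1) (f g : Lottery X) : Lottery X where
  val := α • f.val + (1 - α) • g.val
  nonneg := fun x => by
    have hf := f.nonneg x
    have hg := g.nonneg x
    simp only [Finsupp.coe_add, Finsupp.coe_smul, Pi.add_apply, Pi.smul_apply, smul_eq_mul]
    nlinarith
  total := by
    rw [Finsupp.sum_add_index' (fun _ => rfl) (fun _ _ _ => rfl)]
    rw [Finsupp.sum_smul_index (fun _ => rfl), Finsupp.sum_smul_index (fun _ => rfl)]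
    rw [← Finsupp.mul_sum, ← Finsupp.mul_sum, f.total, g.total]
    ring

/-- The uniform lottery on `a` and `b`, written `a/b` in the paper. -/
def unif (a b : X) : Lottery X := mix (1/2) (by norm_num) (by norm_num) (delta a) (delta b)

/-- Strict preference. -/
def SPref (R : Lottery X → Lottery X → Prop) (f g : Lottery X) : Prop := R f g ∧ ¬ R g f

/-- Indifference. -/
def Indiff (R : Lottery X → Lottery X → Prop) (f g : Lottery X) : Prop := R f g ∧ R g f

/-- Incomparability. -/
def Incomp (R : Lottery X → Lottery X → Prop) (f g : Lottery X) : Prop := ¬ R f g ∧ ¬ R g f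

/-- Negative Dominance. -/
def NegDominance (R : Lottery X → Lottery X → Prop) : Prop :=
  ∀ f g : Lottery X, SPref R f g →
    ∃ o ∈ f.val.support, ∃ o' ∈ g.val.support, SPref R (delta o) (delta o')

/-- Independence. -/
def Independence (R : Lottery X → Lottery X → Prop) : Prop :=
  ∀ f g h : Lottery X, ∀ α : ℝ, ∀ (h1 : 0 < α) (h2 : α < 1),
    (R f g ↔ R (mix α h1.le h2.le f h) (mix α h1.le h2.le g h))

/-- The coordinatewise expectation of a lottery on `ℝ²`. -/
def expLot (f : Lottery (ℝ × ℝ)) : ℝ × ℝ :=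
  (f.val.sum fun o p => p * o.1, f.val.sum fun o p => p * o.2)

/-- Pareto. -/
def Pareto (R : Lottery (ℝ × ℝ) → Lottery (ℝ × ℝ) → Prop) : Prop :=
  ∀ x y x' y' : ℝ, x' ≤ x → y' ≤ y → R (delta (x, y)) (delta (x', y'))

/-- Converse Pareto. -/
def ConvPareto (R : Lottery (ℝ × ℝ) → Lottery (ℝ × ℝ) → Prop) : Prop :=
  ∀ x y x' y' : ℝ, R (delta (x, y)) (delta (x', y')) → x' ≤ x ∧ y' ≤ y

/-- Two outcomes are unidimensional with each other if they differ in at most one coordinate. -/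
def UniWith {A B : Type*} (o o' : A × B) : Prop := o.1 = o'.1 ∨ o.2 = o'.2

/-- A lottery is unidimensional if any two outcomes in its support are unidimensional
with each other. -/
def Unidim {A B : Type*} (f : Lottery (A × B)) : Prop :=
  ∀ o ∈ f.val.support, ∀ o' ∈ f.val.support, UniWith o o'

/-- Expectationalism. -/
def Expectationalism (R : Lottery (ℝ × ℝ) → Lottery (ℝ × ℝ) → Prop) : Prop :=
  ∀ f, Indiff R f (delta (expLot f))

/-- Unidimensional Expectations. -/
def UnidimExp (R : Lottery (ℝ × ℝ) → Lottery (ℝ × ℝ) → Prop) : Prop :=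
  ∀ f, Unidim f → Indiff R f (delta (expLot f))

end Lottery

open Lottery

/-- Weak Unidimensional Expectations. -/
def WeakUnidimExp (R : Lottery (ℝ × ℝ) → Lottery (ℝ × ℝ) → Prop) : Prop :=
  ∀ f : Lottery (ℝ × ℝ), Unidim f → ∀ g : Lottery (ℝ × ℝ),
    (SPref R (delta (expLot f)) g → SPref R f g) ∧
    (SPref R g (delta (expLot f)) → SPref R g f)

namespace S7Aux

open Lottery

lemma lot_eq {f g : Lottery (ℝ × ℝ)} (h : f.val = g.val) : f = g := by
  cases f; cases g; simpa using h

lemma mix_val (α : ℝ) (h1 : 0 ≤ α) (h2 : α ≤ 1) (f g : Lottery (ℝ × ℝ)) :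
    (mix α h1 h2 f g).val = α • f.val + (1 - α) • g.val := rfl

lemma delta_val (o : ℝ × ℝ) : (delta o).val = Finsupp.single o 1 := rfl

lemma supp_delta {o x : ℝ × ℝ} (h : x ∈ (delta o).val.support) : x = o := by
  classical
  have hx := Finsupp.mem_support_iff.mp h
  by_contra hne
  apply hx
  simp [delta_val, Finsupp.single_apply, Ne.symm hne]

lemma supp_mix_delta {α : ℝ} {h1 : 0 ≤ α} {h2 : α ≤ 1} {o₁ o₂ x : ℝ × ℝ}
    (h : x ∈ (mix α h1 h2 (delta o₁) (delta o₂)).val.support) : x = o₁ ∨ x = o₂ := by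
  classical
  have hx := Finsupp.mem_support_iff.mp h
  by_contra hne
  push_neg at hne
  apply hx
  simp [mix_val, delta_val, Finsupp.single_apply, Ne.symm hne.1, Ne.symm hne.2]

lemma sum_pair (α : ℝ) (o₁ o₂ : ℝ × ℝ) (φ : ℝ × ℝ → ℝ) :
    ((α • Finsupp.single o₁ (1:ℝ) + (1 - α) • Finsupp.single o₂ (1:ℝ)).sum
        fun o p => p * φ o) = α * φ o₁ + (1 - α) * φ o₂ := by
  classical
  rw [Finsupp.smul_single', Finsupp.smul_single', mul_one, mul_one,
    Finsupp.sum_add_index' (fun a => zero_mul (φ a)) (fun a b₁ b₂ => add_mul b₁ b₂ (φ a)),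
    Finsupp.sum_single_index (zero_mul (φ o₁)), Finsupp.sum_single_index (zero_mul (φ o₂))]

lemma sum_pair_fst (α : ℝ) (o₁ o₂ : ℝ × ℝ) :
    ((α • Finsupp.single o₁ (1:ℝ) + (1 - α) • Finsupp.single o₂ (1:ℝ)).sum
        fun o p => p * o.1) = α * o₁.1 + (1 - α) * o₂.1 :=
  sum_pair α o₁ o₂ (fun o => o.1)

lemma sum_pair_snd (α : ℝ) (o₁ o₂ : ℝ × ℝ) :
    ((α • Finsupp.single o₁ (1:ℝ) + (1 - α) • Finsupp.single o₂ (1:ℝ)).sum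
        fun o p => p * o.2) = α * o₁.2 + (1 - α) * o₂.2 :=
  sum_pair α o₁ o₂ (fun o => o.2)

lemma expLot_mix_delta (α : ℝ) (h1 : 0 ≤ α) (h2 : α ≤ 1) (o₁ o₂ : ℝ × ℝ) :
    expLot (mix α h1 h2 (delta o₁) (delta o₂))
      = (α * o₁.1 + (1 - α) * o₂.1, α * o₁.2 + (1 - α) * o₂.2) := by
  unfold expLot
  rw [mix_val, delta_val, delta_val, sum_pair_fst, sum_pair_snd]

lemma unidim_mix_delta {o₁ o₂ : ℝ × ℝ} (h : UniWith o₁ o₂) {α : ℝ} {h1 : 0 ≤ α} {h2 : α ≤ 1} :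
    Unidim (mix α h1 h2 (delta o₁) (delta o₂)) := by
  intro x hx y hy
  rcases supp_mix_delta hx with rfl | rfl <;> rcases supp_mix_delta hy with rfl | rfl
  · exact Or.inl rfl
  · exact h
  · rcases h with h' | h'
    · exact Or.inl h'.symm
    · exact Or.inr h'.symm
  · exact Or.inl rfl

variable {R : Lottery (ℝ × ℝ) → Lottery (ℝ × ℝ) → Prop}

lemma spref_delta (hP : Pareto R) (hC : ConvPareto R) {x y x' y' : ℝ}
    (h₁ : x' ≤ x) (h₂ : y' ≤ y) (h₃ : ¬(x ≤ x' ∧ y ≤ y')) :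
    SPref R (delta (x, y)) (delta (x', y')) :=
  ⟨hP x y x' y' h₁ h₂, fun hr => h₃ (hC x' y' x y hr)⟩

lemma sp_trans_right (hT : Transitive R) {f g h : Lottery (ℝ × ℝ)}
    (h1 : SPref R f g) (h2 : R g h) : SPref R f h :=
  ⟨hT h1.1 h2, fun hr => h1.2 (hT h2 hr)⟩

lemma indep_spref (hI : Independence R) {f g : Lottery (ℝ × ℝ)} (h : Lottery (ℝ × ℝ))
    {α : ℝ} (h1 : 0 < α) (h2 : α < 1) (hs : SPref R f g) :
    SPref R (mix α h1.le h2.le f h) (mix α h1.le h2.le g h) :=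
  ⟨(hI f g h α h1 h2).1 hs.1, fun hr => hs.2 ((hI g f h α h1 h2).2 hr)⟩

end S7Aux

namespace S7Aux

open Lottery

/-- `G = ½δ(1,0) + ½δ(0,1)`. -/
def LG : Lottery (ℝ × ℝ) :=
  mix (1/2) (by norm_num) (by norm_num) (delta ((1:ℝ), (0:ℝ))) (delta ((0:ℝ), (1:ℝ)))

/-- `Z = ½G + ½δ(4/5, 3/2)`. -/
def LZ : Lottery (ℝ × ℝ) :=
  mix (1/2) (by norm_num) (by norm_num) LG (delta ((4/5:ℝ), (3/2:ℝ)))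

/-- `Z₁ = ½G + ½δ(1, 3/2)`. -/
def LZ1 : Lottery (ℝ × ℝ) :=
  mix (1/2) (by norm_num) (by norm_num) LG (delta ((1:ℝ), (3/2:ℝ)))

/-- `W = ⅓δ(1,0) + ⅔δ(1,3/2)`, unidimensional with expectation `(1,1)`. -/
def LW : Lottery (ℝ × ℝ) :=
  mix (1/3) (by norm_num) (by norm_num) (delta ((1:ℝ), (0:ℝ))) (delta ((1:ℝ), (3/2:ℝ)))

/-- `Z₂ = ¾δ(1,11/10) + ¼δ(0,1)`. -/
def LZ2 : Lottery (ℝ × ℝ) :=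
  mix (3/4) (by norm_num) (by norm_num) (delta ((1:ℝ), (11/10:ℝ))) (delta ((0:ℝ), (1:ℝ)))

/-- `Z₃ = ¾δ(1,11/10) + ¼δ(0,11/10)`, unidimensional with expectation `(3/4,11/10)`. -/
def LZ3 : Lottery (ℝ × ℝ) :=
  mix (3/4) (by norm_num) (by norm_num) (delta ((1:ℝ), (11/10:ℝ))) (delta ((0:ℝ), (11/10:ℝ)))

/-- `X = ½δ(4/5,9/10) + ½δ(4/5,3/2)`, unidimensional with expectation `(4/5,6/5)`. -/
def LX : Lottery (ℝ × ℝ) :=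
  mix (1/2) (by norm_num) (by norm_num) (delta ((4/5:ℝ), (9/10:ℝ))) (delta ((4/5:ℝ), (3/2:ℝ)))

end S7Aux


open S7Aux in
/-- There is no preorder on Δ satisfying Pareto, Converse Pareto,
Weak Unidimensional Expectations, Independence, and Negative Dominance. -/
theorem statement7 :
    ¬ ∃ R : Lottery (ℝ × ℝ) → Lottery (ℝ × ℝ) → Prop,
      Reflexive R ∧ Transitive R ∧ Pareto R ∧ ConvPareto R ∧
      WeakUnidimExp R ∧ Independence R ∧ NegDominance R := by
  rintro ⟨R, -, hTrans, hPar, hConv, hWUE, hInd, hND⟩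
  classical
  -- Part B1 : ¬ R (δ(4/5,9/10)) G, using Negative Dominance and Converse Pareto.
  have hnQG : ¬ R (delta ((4/5:ℝ), (9/10:ℝ))) LG := by
    intro hQG
    have hs1q : SPref R (delta ((9/10:ℝ), (19/20:ℝ))) (delta ((4/5:ℝ), (9/10:ℝ))) :=
      spref_delta hPar hConv (by norm_num) (by norm_num) (by norm_num)
    have hs1G : R (delta ((9/10:ℝ), (19/20:ℝ))) LG := hTrans hs1q.1 hQG
    by_cases hGs1 : R LG (delta ((9/10:ℝ), (19/20:ℝ)))
    · have hs2s1 : R (delta ((19/20:ℝ), (39/40:ℝ))) (delta ((9/10:ℝ), (19/20:ℝ))) :=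
        hPar _ _ _ _ (by norm_num) (by norm_num)
      have hs2G : R (delta ((19/20:ℝ), (39/40:ℝ))) LG := hTrans hs2s1 hs1G
      have hns2 : ¬ R LG (delta ((19/20:ℝ), (39/40:ℝ))) := by
        intro hr
        have h12 := hConv _ _ _ _ (hTrans hs1G hr)
        norm_num at h12
      obtain ⟨o, ho, o', ho', hoo'⟩ := hND _ _ ⟨hs2G, hns2⟩
      rcases supp_delta ho with rfl
      rcases supp_mix_delta ho' with rfl | rfl
      · have := hConv _ _ _ _ hoo'.1; norm_num at this
      · have := hConv _ _ _ _ hoo'.1; norm_num at this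
    · obtain ⟨o, ho, o', ho', hoo'⟩ := hND _ _ ⟨hs1G, hGs1⟩
      rcases supp_delta ho with rfl
      rcases supp_mix_delta ho' with rfl | rfl
      · have := hConv _ _ _ _ hoo'.1; norm_num at this
      · have := hConv _ _ _ _ hoo'.1; norm_num at this
  -- Part B2 : by Independence, ¬ R X Z.
  have hnXZ : ¬ R LX LZ := by
    intro hr
    exact hnQG ((hInd (delta ((4/5:ℝ), (9/10:ℝ))) LG (delta ((4/5:ℝ), (3/2:ℝ))) (1/2)
      (by norm_num) (by norm_num)).2 hr)
  -- Part A : derive δ(4/5,6/5) ≻ Z.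
  -- A1 : R Z₁ Z   (raise (4/5,3/2) to (1,3/2))
  have hpp' : R (delta ((1:ℝ), (3/2:ℝ))) (delta ((4/5:ℝ), (3/2:ℝ))) :=
    hPar _ _ _ _ (by norm_num) le_rfl
  have hA1 : R LZ1 LZ := by
    have h := (hInd (delta ((1:ℝ), (3/2:ℝ))) (delta ((4/5:ℝ), (3/2:ℝ))) LG (1/2)
      (by norm_num) (by norm_num)).1 hpp'
    have e1 : mix (1/2) (by norm_num) (by norm_num) (delta ((1:ℝ), (3/2:ℝ))) LG = LZ1 :=
      lot_eq (by
        ext x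
        simp only [LZ1, LG, mix_val, delta_val, Finsupp.coe_add, Finsupp.coe_smul,
          Pi.add_apply, Pi.smul_apply, smul_eq_mul]
        ring)
    have e2 : mix (1/2) (by norm_num) (by norm_num) (delta ((4/5:ℝ), (3/2:ℝ))) LG = LZ :=
      lot_eq (by
        ext x
        simp only [LZ, LG, mix_val, delta_val, Finsupp.coe_add, Finsupp.coe_smul,
          Pi.add_apply, Pi.smul_apply, smul_eq_mul]
        ring)
    rw [e1, e2] at h
    exact h
  -- A2 : δ(1,11/10) ≻ W by Weak Unidimensional Expectations.
  have hWuni : Unidim LW := by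
    unfold LW
    refine unidim_mix_delta ?_
    exact Or.inl rfl
  have hWexp : expLot LW = ((1:ℝ), (1:ℝ)) := by
    unfold LW
    rw [expLot_mix_delta]
    norm_num [Prod.mk.injEq]
  have hT1W : SPref R (delta ((1:ℝ), (11/10:ℝ))) LW := by
    have h := (hWUE LW hWuni (delta ((1:ℝ), (11/10:ℝ)))).2
    rw [hWexp] at h
    exact h (spref_delta hPar hConv le_rfl (by norm_num) (by norm_num))
  -- A3 : Z₂ ≻ Z₁ by Independence (note Z₁ = ¾W + ¼δ(0,1)).
  have h5 : SPref R LZ2 LZ1 := by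
    have h := indep_spref hInd (delta ((0:ℝ), (1:ℝ)))
      (by norm_num : (0:ℝ) < 3/4) (by norm_num) hT1W
    have e : mix (3/4) (by norm_num) (by norm_num) LW (delta ((0:ℝ), (1:ℝ))) = LZ1 :=
      lot_eq (by
        ext x
        simp only [LZ1, LW, LG, mix_val, delta_val, Finsupp.coe_add, Finsupp.coe_smul,
          Pi.add_apply, Pi.smul_apply, smul_eq_mul]
        ring)
    rw [e] at h
    exact h
  -- A4 : R Z₃ Z₂  (raise (0,1) to (0,11/10))
  have h6 : R LZ3 LZ2 := by
    have hb : R (delta ((0:ℝ), (11/10:ℝ))) (delta ((0:ℝ), (1:ℝ))) :=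
      hPar _ _ _ _ le_rfl (by norm_num)
    have h := (hInd (delta ((0:ℝ), (11/10:ℝ))) (delta ((0:ℝ), (1:ℝ)))
      (delta ((1:ℝ), (11/10:ℝ))) (1/4) (by norm_num) (by norm_num)).1 hb
    have e1 : mix (1/4) (by norm_num) (by norm_num) (delta ((0:ℝ), (11/10:ℝ)))
        (delta ((1:ℝ), (11/10:ℝ))) = LZ3 :=
      lot_eq (by
        ext x
        simp only [LZ3, mix_val, delta_val, Finsupp.coe_add, Finsupp.coe_smul,
          Pi.add_apply, Pi.smul_apply, smul_eq_mul]
        ring)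
    have e2 : mix (1/4) (by norm_num) (by norm_num) (delta ((0:ℝ), (1:ℝ)))
        (delta ((1:ℝ), (11/10:ℝ))) = LZ2 :=
      lot_eq (by
        ext x
        simp only [LZ2, mix_val, delta_val, Finsupp.coe_add, Finsupp.coe_smul,
          Pi.add_apply, Pi.smul_apply, smul_eq_mul]
        ring)
    rw [e1, e2] at h
    exact h
  -- A5 : δ(4/5,6/5) ≻ Z₃ by Weak Unidimensional Expectations.
  have hZ3uni : Unidim LZ3 := by
    unfold LZ3
    refine unidim_mix_delta ?_
    exact Or.inr rfl
  have hZ3exp : expLot LZ3 = ((3/4:ℝ), (11/10:ℝ)) := by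
    unfold LZ3
    rw [expLot_mix_delta]
    norm_num [Prod.mk.injEq]
  have hA5 : SPref R (delta ((4/5:ℝ), (6/5:ℝ))) LZ3 := by
    have h := (hWUE LZ3 hZ3uni (delta ((4/5:ℝ), (6/5:ℝ)))).2
    rw [hZ3exp] at h
    exact h (spref_delta hPar hConv (by norm_num) (by norm_num) (by norm_num))
  -- A6 : chain the comparisons.
  have hA : SPref R (delta ((4/5:ℝ), (6/5:ℝ))) LZ :=
    sp_trans_right hTrans (sp_trans_right hTrans (sp_trans_right hTrans hA5 h6) h5.1) hA1
  -- Final contradiction via Weak Unidimensional Expectations on X.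
  have hXuni : Unidim LX := by
    unfold LX
    refine unidim_mix_delta ?_
    exact Or.inl rfl
  have hXexp : expLot LX = ((4/5:ℝ), (6/5:ℝ)) := by
    unfold LX
    rw [expLot_mix_delta]
    norm_num [Prod.mk.injEq]
  have hfin : SPref R LX LZ := by
    have h := (hWUE LX hXuni LZ).1
    rw [hXexp] at h
    exact h hA
  exact hnXZ hfin.1
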